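/- Let q = 6 + 2√5 and ψ₅(x,y) = x⁵ − (50+20√5)x³y² + (225+100√5)xy⁴. The zeta polynomial of ψ₅ (with respect to q) equals P₅(T) = −((2+√5)/4)·(4T − 1 + √5)·(8T² − 4√5·T + 3 − √5). -/

import Mathlib

noncomputable section

abbrev Cxy : Type := MvPolynomial (Fin 2) ℂ

/-- The formal power series expansion of `1/((1-T)(1-qT))`. -/
def geomQ (q : ℝ) : PowerSeries Cxy :=
  PowerSeries.mk fun m => algebraMap ℂ Cxy (∑ j ∈ Finset.range (m + 1), (q : ℂ) ^ j)

/-- A polynomial `P(T) ∈ ℂ[T]` viewed as a power series with coefficients in ℂ[x,y]. -/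
def polyToSeries (P : Polynomial ℂ) : PowerSeries Cxy :=
  PowerSeries.mk fun m => algebraMap ℂ Cxy (P.coeff m)

/-- The power series `(y(1-T) + xT)^n`. -/
def bodySeries (n : ℕ) : PowerSeries Cxy :=
  (PowerSeries.C (MvPolynomial.X 1) * (1 - PowerSeries.X)
    + PowerSeries.C (MvPolynomial.X 0) * PowerSeries.X) ^ n

/-- `P` is a (= the) zeta polynomial of `W` (of shape `x^n + ∑_{i=d}^n A_i x^{n-i}y^i`). -/
def IsZetaPoly (q : ℝ) (n d : ℕ) (W : Cxy) (P : Polynomial ℂ) : Prop :=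
  P.degree ≤ (n - d : ℕ) ∧
  PowerSeries.coeff (n - d) (polyToSeries P * geomQ q * bodySeries n)
    = MvPolynomial.C (((q : ℂ) - 1)⁻¹) * (W - MvPolynomial.X 0 ^ n)

def sqrt5C : ℂ := (Real.sqrt 5 : ℝ)

def psi5 : Cxy :=
  MvPolynomial.X 0 ^ 5
    - MvPolynomial.C (50 + 20 * sqrt5C) * MvPolynomial.X 0 ^ 3 * MvPolynomial.X 1 ^ 2
    + MvPolynomial.C (225 + 100 * sqrt5C) * MvPolynomial.X 0 * MvPolynomial.X 1 ^ 4

def P5 : Polynomial ℂ :=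
  -(Polynomial.C ((2 + sqrt5C) / 4)) *
    (Polynomial.C 4 * Polynomial.X - Polynomial.C 1 + Polynomial.C sqrt5C) *
    (Polynomial.C 8 * Polynomial.X ^ 2 - Polynomial.C (4 * sqrt5C) * Polynomial.X
      + Polynomial.C 3 - Polynomial.C sqrt5C)

/-!
Since `(1 - T)(1 - qT)` is inverted by the series `geomQ q`, only `P₅ / ((1 - T)(1 - qT))`
modulo `T⁴` enters the coefficient of `T³`; dividing `P₅` by `(1 - T)(1 - qT)` to that order
gives `-1 - 3T + (2√5 - 1)T² + (15 + 10√5)T³`. Pairing these coefficients with the binomial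
coefficients `C(5,i) y^(5-i) (x - y)^i` of `(y + (x - y)T)⁵` yields `-10x³y² + (25 + 10√5)xy⁴`,
and multiplying by `q - 1 = 5 + 2√5` gives `ψ₅ - x⁵`.
-/

namespace PowerSeries

variable {R : Type*} [CommRing R]

theorem mk_geom_sum_mul_one_sub_mul_one_sub (a : R) :
    mk (fun m => ∑ j ∈ Finset.range (m + 1), a ^ j) * ((1 - X) * (1 - C a * X)) = 1 := by
  have hsplit : mk (fun m => ∑ j ∈ Finset.range (m + 1), a ^ j) = mk 1 * mk (a ^ ·) := by
    ext m
    rw [coeff_mul, Finset.Nat.sum_antidiagonal_eq_sum_range_succ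
      (fun i j => coeff i (mk 1) * coeff j (mk (a ^ ·)))]
    simp only [coeff_mk, Pi.one_apply, one_mul]
    exact (Finset.sum_range_reflect (a ^ ·) (m + 1)).symm
  have hpow : mk (a ^ ·) * (1 - C a * X) = 1 := by
    simpa [rescale_mk, rescale_X] using congrArg (rescale a) (mk_one_mul_one_sub_eq_one R)
  rw [hsplit, mul_mul_mul_comm, mk_one_mul_one_sub_eq_one, hpow, one_mul]

end PowerSeries

open PowerSeries

theorem geomQ_mul_one_sub_mul_one_sub (q : ℝ) :
    geomQ q * ((1 - X) * (1 - C (MvPolynomial.C (q : ℂ)) * X)) = 1 := by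
  simpa [geomQ, map_sum, map_pow] using
    mk_geom_sum_mul_one_sub_mul_one_sub (MvPolynomial.C (q : ℂ) : Cxy)

theorem polyToSeries_eq_map_coe (P : Polynomial ℂ) :
    polyToSeries P = PowerSeries.map (algebraMap ℂ Cxy) (P : PowerSeries ℂ) := by
  ext m
  simp [polyToSeries]

theorem polyToSeries_mul_geomQ_of_eq {q : ℝ} {P Q R : Polynomial ℂ} {N : ℕ}
    (h : P = (1 - Polynomial.X) * (1 - Polynomial.C (q : ℂ) * Polynomial.X) * Q
      + Polynomial.X ^ N * R) :
    polyToSeries P * geomQ q = polyToSeries Q + X ^ N * (polyToSeries R * geomQ q) := by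
  have hP : polyToSeries P = (1 - X) * (1 - C (MvPolynomial.C (q : ℂ)) * X) * polyToSeries Q
      + X ^ N * polyToSeries R := by
    simp only [polyToSeries_eq_map_coe, h, Polynomial.coe_add, Polynomial.coe_mul,
      Polynomial.coe_sub, Polynomial.coe_pow, Polynomial.coe_one, Polynomial.coe_X,
      Polynomial.coe_C, map_add, map_mul, map_sub, map_pow, map_one, map_X, map_C,
      MvPolynomial.algebraMap_eq]
  linear_combination polyToSeries Q * geomQ_mul_one_sub_mul_one_sub q + hP * geomQ q

theorem coeff_polyToSeries_mul_geomQ_mul_of_eq {q : ℝ} {P Q R : Polynomial ℂ} {N m : ℕ}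
    (h : P = (1 - Polynomial.X) * (1 - Polynomial.C (q : ℂ) * Polynomial.X) * Q
      + Polynomial.X ^ N * R) (hm : m < N) (B : PowerSeries Cxy) :
    coeff m (polyToSeries P * geomQ q * B) = coeff m (polyToSeries Q * B) := by
  rw [polyToSeries_mul_geomQ_of_eq h, add_mul, map_add, mul_assoc, coeff_X_pow_mul',
    if_neg (not_le.mpr hm), add_zero]

theorem bodySeries_eq (n : ℕ) :
    bodySeries n = (C (MvPolynomial.X 0 - MvPolynomial.X 1) * X + C (MvPolynomial.X 1)) ^ n := by
  rw [bodySeries, map_sub]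
  ring

theorem coeff_bodySeries (n i : ℕ) :
    coeff i (bodySeries n) = (n.choose i : Cxy) * MvPolynomial.X 1 ^ (n - i)
      * (MvPolynomial.X 0 - MvPolynomial.X 1) ^ i := by
  have hterm : ∀ m, (C (MvPolynomial.X 0 - MvPolynomial.X 1) * X) ^ m
      * C (MvPolynomial.X 1 : Cxy) ^ (n - m) * (n.choose m : Cxy⟦X⟧)
      = C ((n.choose m : Cxy) * MvPolynomial.X 1 ^ (n - m)
          * (MvPolynomial.X 0 - MvPolynomial.X 1) ^ m) * X ^ m := by
    intro m
    simp only [map_mul, map_pow, map_natCast]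
    ring
  simp only [bodySeries_eq, add_pow, map_sum, hterm, coeff_C_mul_X_pow]
  rw [Finset.sum_ite_eq]
  split_ifs with hi
  · rfl
  · rw [Finset.mem_range, not_lt] at hi
    rw [Nat.choose_eq_zero_of_lt (by omega), Nat.cast_zero, zero_mul, zero_mul]

theorem sqrt5C_sq : sqrt5C ^ 2 = 5 := by
  rw [sqrt5C, ← Complex.ofReal_pow, Real.sq_sqrt (by norm_num)]
  norm_num

theorem degree_P5_le : P5.degree ≤ 3 := by
  unfold P5
  compute_degree

/-- `P₅ / ((1 - T)(1 - qT))` modulo `T⁴`. -/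
def P5SeriesTrunc : Polynomial ℂ :=
  Polynomial.C (-1) - Polynomial.C 3 * Polynomial.X
    + Polynomial.C (2 * sqrt5C - 1) * Polynomial.X ^ 2 + Polynomial.C (15 + 10 * sqrt5C) * Polynomial.X ^ 3

theorem P5_eq_mul_add_X_pow_mul :
    P5 = (1 - Polynomial.X) * (1 - Polynomial.C ((6 + 2 * Real.sqrt 5 : ℝ) : ℂ) * Polynomial.X)
        * P5SeriesTrunc
      + Polynomial.X ^ 4 * (Polynomial.C (191 + 90 * sqrt5C)
          - Polynomial.C (190 + 90 * sqrt5C) * Polynomial.X) := by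
  apply Polynomial.funext
  intro z
  simp only [P5, P5SeriesTrunc, Polynomial.eval_mul, Polynomial.eval_add, Polynomial.eval_sub,
    Polynomial.eval_neg, Polynomial.eval_C, Polynomial.eval_X, Polynomial.eval_pow,
    Polynomial.eval_one]
  push_cast
  rw [← sqrt5C]
  linear_combination
    (-1/2 + sqrt5C/4 + 2*z + z*sqrt5C + 2*z^2 + 4*z^3 + 16*z^4 - 20*z^5) * sqrt5C_sq

theorem coeff_three_polyToSeries_mul_bodySeries_five :
    coeff 3 (polyToSeries P5SeriesTrunc * bodySeries 5)
      = MvPolynomial.C (-10) * MvPolynomial.X 0 ^ 3 * MvPolynomial.X 1 ^ 2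
        + MvPolynomial.C (25 + 10 * sqrt5C) * MvPolynomial.X 0 * MvPolynomial.X 1 ^ 4 := by
  simp only [coeff_mul, Finset.Nat.sum_antidiagonal_eq_sum_range_succ_mk, Finset.sum_range_succ,
    Finset.sum_range_zero, coeff_bodySeries, polyToSeries, P5SeriesTrunc, coeff_mk,
    MvPolynomial.algebraMap_eq, Polynomial.coeff_add, Polynomial.coeff_sub,
    Polynomial.coeff_C_mul, Polynomial.coeff_X_pow, Polynomial.coeff_C, Polynomial.coeff_X]
  norm_num [Nat.choose]
  simp only [map_ofNat]
  ring

theorem psi5_sub_X_pow :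
    psi5 - MvPolynomial.X 0 ^ 5 = MvPolynomial.C (5 + 2 * sqrt5C) *
      (MvPolynomial.C (-10) * MvPolynomial.X 0 ^ 3 * MvPolynomial.X 1 ^ 2
        + MvPolynomial.C (25 + 10 * sqrt5C) * MvPolynomial.X 0 * MvPolynomial.X 1 ^ 4) := by
  have hsq : (MvPolynomial.C sqrt5C : Cxy) ^ 2 = 5 := by
    rw [← map_pow, sqrt5C_sq, map_ofNat]
  simp only [psi5, map_add, map_mul, map_neg, map_ofNat]
  linear_combination (-20 * MvPolynomial.X 0 * MvPolynomial.X 1 ^ 4 : Cxy) * hsq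

theorem six_add_two_mul_sqrt5_sub_one_inv_mul :
    (((6 + 2 * Real.sqrt 5 : ℝ) : ℂ) - 1)⁻¹ * (5 + 2 * sqrt5C) = 1 := by
  have hpos : (0 : ℝ) < 5 + 2 * Real.sqrt 5 := by positivity
  rw [sqrt5C]
  push_cast
  rw [show (6 + 2 * (Real.sqrt 5 : ℂ) - 1) = 5 + 2 * (Real.sqrt 5 : ℂ) by ring]
  exact inv_mul_cancel₀ (by exact_mod_cast hpos.ne')

theorem zeta_poly_of_psi5 : IsZetaPoly (6 + 2 * Real.sqrt 5) 5 2 psi5 P5 := by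
  refine ⟨degree_P5_le, ?_⟩
  rw [coeff_polyToSeries_mul_geomQ_mul_of_eq P5_eq_mul_add_X_pow_mul (by norm_num),
    show 5 - 2 = 3 from rfl, coeff_three_polyToSeries_mul_bodySeries_five, psi5_sub_X_pow,
    ← mul_assoc, ← map_mul, six_add_two_mul_sqrt5_sub_one_inv_mul, map_one, one_mul]

end
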